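/- For m ∈ ℕ₊, α > 2, and z ≥ 0, the function Q(z) = ₂F₁(m, −2/α; 1 − 2/α; −z) − 1 is nonnegative, strictly increasing in z, and satisfies Q(0) = 0 and Q(z) → ∞ as z → ∞. Consequently λ_B/((λ̃/2)Q(z) + λ_B) is strictly decreasing in z from 1 toward 0 for any fixed λ_B, λ̃ > 0. -/

import Mathlib

/-!
Write `Q(z) = 2 ∫_1^∞ f_z(t) dt` with `f_z(t) = (1 - (1 + z t^{-α})^{-p}) t`. For `z ≥ 0` the
integrand is nonnegative, strictly increasing in `z`, and dominated by `p z t^{1-α}` (from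
`log (1 + x) ≤ x`), which is integrable because `α > 2`; this gives `Q ≥ 0`, `Q(0) = 0` and strict
monotonicity. For `t ≤ z^{1/α}` we have `z t^{-α} ≥ 1`, so `f_z(t) ≥ (1 - 2^{-p}) t` and
`Q(z) ≥ (1 - 2^{-p}) (z^{2/α} - 1) → ∞`. The claims on `λ_B / ((λ̃/2) Q + λ_B)` follow because
`a / (b q + a)` is strictly decreasing in `q ≥ 0` and tends to `0`.
-/

open Real Filter Topology

/-- The Gauss hypergeometric function `₂F₁(m, −2/α; 1 − 2/α; −z)` for integer first parameter
`m`, exponent `α > 2` and `z ≥ 0`, via the integral representation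
`₂F₁(m, −2/α; 1 − 2/α; −z) = 1 + 2 ∫_1^∞ (1 − (1 + z t^{−α})^{−m}) t dt`. -/
noncomputable def hyp2F1Neg (m : ℕ) (α z : ℝ) : ℝ :=
  1 + 2 * ∫ t in Set.Ioi (1:ℝ), (1 - (1 + z * t ^ (-α)) ^ (-(m : ℝ))) * t

open MeasureTheory Set

theorem one_sub_rpow_neg_le_mul {x p : ℝ} (hx : -1 < x) (hp : 0 ≤ p) :
    1 - (1 + x) ^ (-p) ≤ p * x := by
  have hlog : log (1 + x) ≤ x := by linarith [log_le_sub_one_of_pos (by linarith : 0 < 1 + x)]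
  have := add_one_le_exp (log (1 + x) * -p)
  rw [rpow_def_of_pos (by linarith)]
  nlinarith

theorem setIntegral_lt_setIntegral_of_forall_lt {X : Type*} [MeasurableSpace X] {μ : Measure X}
    {s : Set X} {f g : X → ℝ} (hs : MeasurableSet s) (hμs : μ s ≠ 0)
    (hf : IntegrableOn f s μ) (hg : IntegrableOn g s μ) (hlt : ∀ x ∈ s, f x < g x) :
    ∫ x in s, f x ∂μ < ∫ x in s, g x ∂μ := by
  have hpos : ∀ x ∈ s, 0 < g x - f x := fun x hx => sub_pos.2 (hlt x hx)
  have hnonneg : 0 ≤ᵐ[μ.restrict s] fun x => g x - f x :=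
    (ae_restrict_mem hs).mono fun x hx => (hpos x hx).le
  rw [← sub_pos, ← integral_sub hg hf, setIntegral_pos_iff_support_of_nonneg_ae hnonneg (hg.sub hf)]
  exact (pos_iff_ne_zero.2 hμs).trans_le (measure_mono fun x hx => ⟨(hpos x hx).ne', hx⟩)

theorem strictAntiOn_div_mul_add {s : Set ℝ} {g : ℝ → ℝ} {a b : ℝ} (ha : 0 < a) (hb : 0 < b)
    (hg₀ : ∀ z ∈ s, 0 ≤ g z) (hg : StrictMonoOn g s) :
    StrictAntiOn (fun z => a / (b * g z + a)) s := by
  intro x hx y hy hxy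
  have hx₀ : 0 < b * g x + a := by nlinarith [hg₀ x hx]
  exact div_lt_div_of_pos_left ha hx₀ (by nlinarith [hg hx hy hxy])

noncomputable def hypIntegrand (p α z t : ℝ) : ℝ := (1 - (1 + z * t ^ (-α)) ^ (-p)) * t

noncomputable def hypQ (p α z : ℝ) : ℝ := 2 * ∫ t in Ioi 1, hypIntegrand p α z t

theorem hyp2F1Neg_sub_one (m : ℕ) (α z : ℝ) : hyp2F1Neg m α z - 1 = hypQ m α z := by
  rw [hyp2F1Neg, add_sub_cancel_left]
  rfl

section
variable {p α z t : ℝ}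

theorem hypIntegrand_nonneg (hp : 0 ≤ p) (hz : 0 ≤ z) (ht : 0 < t) :
    0 ≤ hypIntegrand p α z t := by
  have hbase : 1 ≤ 1 + z * t ^ (-α) := by have := rpow_pos_of_pos ht (-α); nlinarith
  exact mul_nonneg (sub_nonneg.2 (rpow_le_one_of_one_le_of_nonpos hbase (neg_nonpos.2 hp))) ht.le

theorem hypIntegrand_le (hp : 0 ≤ p) (hz : 0 ≤ z) (ht : 0 < t) :
    hypIntegrand p α z t ≤ p * z * t ^ (1 - α) := by
  have hu : 0 ≤ z * t ^ (-α) := mul_nonneg hz (rpow_pos_of_pos ht _).le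
  calc hypIntegrand p α z t ≤ p * (z * t ^ (-α)) * t :=
        mul_le_mul_of_nonneg_right (one_sub_rpow_neg_le_mul (by linarith) hp) ht.le
    _ = p * z * t ^ (1 - α) := by rw [sub_eq_neg_add, rpow_add_one ht.ne']; ring

theorem hypIntegrand_lt_hypIntegrand (hp : 0 < p) (ht : 0 < t) {z₁ z₂ : ℝ} (hz₁ : 0 ≤ z₁)
    (hz : z₁ < z₂) : hypIntegrand p α z₁ t < hypIntegrand p α z₂ t := by
  have hu := rpow_pos_of_pos ht (-α)
  have hlt : (1 + z₂ * t ^ (-α)) ^ (-p) < (1 + z₁ * t ^ (-α)) ^ (-p) :=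
    rpow_lt_rpow_of_neg (by nlinarith) (by nlinarith) (neg_neg_of_pos hp)
  exact mul_lt_mul_of_pos_right (by linarith) ht

theorem one_sub_two_rpow_neg_mul_le_hypIntegrand (hp : 0 ≤ p) (ht : 0 < t)
    (hzt : 1 ≤ z * t ^ (-α)) : (1 - 2 ^ (-p)) * t ≤ hypIntegrand p α z t := by
  have : (1 + z * t ^ (-α)) ^ (-p) ≤ 2 ^ (-p) :=
    rpow_le_rpow_of_nonpos two_pos (by linarith) (neg_nonpos.2 hp)
  exact mul_le_mul_of_nonneg_right (by linarith) ht.le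

theorem continuousOn_hypIntegrand (hz : 0 ≤ z) : ContinuousOn (hypIntegrand p α z) (Ioi 0) := by
  have hpow : ContinuousOn (fun t : ℝ => t ^ (-α)) (Ioi 0) :=
    continuousOn_id.rpow_const fun t ht => Or.inl (ne_of_gt ht)
  have hbase : ContinuousOn (fun t : ℝ => 1 + z * t ^ (-α)) (Ioi 0) :=
    continuousOn_const.add (continuousOn_const.mul hpow)
  refine (continuousOn_const.sub (hbase.rpow_const fun t ht => Or.inl ?_)).mul continuousOn_id
  have := rpow_pos_of_pos (mem_Ioi.1 ht) (-α)
  positivity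

theorem integrableOn_hypIntegrand (hp : 0 ≤ p) (hα : 2 < α) (hz : 0 ≤ z) :
    IntegrableOn (hypIntegrand p α z) (Ioi 1) := by
  have hdom : IntegrableOn (fun t : ℝ => p * z * t ^ (1 - α)) (Ioi 1) :=
    (integrableOn_Ioi_rpow_of_lt (by linarith) one_pos).const_mul _
  refine hdom.mono' (((continuousOn_hypIntegrand hz).mono (Ioi_subset_Ioi zero_le_one))
    |>.aestronglyMeasurable measurableSet_Ioi) ?_
  filter_upwards [ae_restrict_mem measurableSet_Ioi] with t ht
  have ht₀ : (0 : ℝ) < t := one_pos.trans ht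
  rw [norm_of_nonneg (hypIntegrand_nonneg hp hz ht₀)]
  exact hypIntegrand_le hp hz ht₀

theorem hypQ_zero : hypQ p α 0 = 0 := by
  simp [hypQ, hypIntegrand]

theorem hypQ_nonneg (hp : 0 ≤ p) (hz : 0 ≤ z) : 0 ≤ hypQ p α z :=
  mul_nonneg zero_le_two <| setIntegral_nonneg measurableSet_Ioi fun _ ht =>
    hypIntegrand_nonneg hp hz (one_pos.trans ht)

theorem hypQ_strictMonoOn (hp : 0 < p) (hα : 2 < α) : StrictMonoOn (hypQ p α) (Ici 0) := by
  intro z₁ hz₁ z₂ hz₂ hz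
  refine mul_lt_mul_of_pos_left ?_ two_pos
  exact setIntegral_lt_setIntegral_of_forall_lt measurableSet_Ioi (by simp)
    (integrableOn_hypIntegrand hp.le hα hz₁) (integrableOn_hypIntegrand hp.le hα hz₂)
    fun t ht => hypIntegrand_lt_hypIntegrand hp (one_pos.trans ht) hz₁ hz

theorem le_hypQ (hp : 0 ≤ p) (hα : 2 < α) (hz : 1 ≤ z) :
    (1 - 2 ^ (-p)) * (z ^ (2 / α) - 1) ≤ hypQ p α z := by
  set R := z ^ (1 / α)
  have hα₀ : 0 < α := by linarith
  have hR : 1 ≤ R := one_le_rpow hz (by positivity)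
  have hRz : R ^ (-α) = z⁻¹ := by
    rw [← rpow_mul (by linarith), one_div_mul_eq_div, neg_div, div_self hα₀.ne', rpow_neg_one]
  have hR2 : R ^ 2 = z ^ (2 / α) := by
    rw [← rpow_natCast, ← rpow_mul (by linarith)]; ring_nf
  have hint := integrableOn_hypIntegrand hp hα (by linarith : 0 ≤ z)
  have hlower : ∫ t in Ioc 1 R, (1 - 2 ^ (-p)) * t ≤ ∫ t in Ioc 1 R, hypIntegrand p α z t := by
    refine setIntegral_mono_on ((continuous_const.mul continuous_id).integrableOn_Ioc)
      (hint.mono_set Ioc_subset_Ioi_self) measurableSet_Ioc fun t ht => ?_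
    have ht₀ : 0 < t := one_pos.trans ht.1
    refine one_sub_two_rpow_neg_mul_le_hypIntegrand hp ht₀ ?_
    calc 1 = z * R ^ (-α) := by rw [hRz, mul_inv_cancel₀ (by linarith)]
      _ ≤ z * t ^ (-α) :=
        mul_le_mul_of_nonneg_left (rpow_le_rpow_of_nonpos ht₀ ht.2 (by linarith)) (by linarith)
  have hrestrict : ∫ t in Ioc 1 R, hypIntegrand p α z t ≤ ∫ t in Ioi 1, hypIntegrand p α z t :=
    setIntegral_mono_set hint
      ((ae_restrict_mem measurableSet_Ioi).mono fun t ht =>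
        hypIntegrand_nonneg hp (by linarith) (one_pos.trans ht))
      Ioc_subset_Ioi_self.eventuallyLE
  have hexplicit : ∫ t in Ioc 1 R, (1 - 2 ^ (-p)) * t = (1 - 2 ^ (-p)) * ((R ^ 2 - 1) / 2) := by
    rw [← intervalIntegral.integral_of_le hR, intervalIntegral.integral_const_mul, integral_id]
    ring
  rw [hypQ, ← hR2]
  linarith

theorem tendsto_hypQ_atTop (hp : 0 < p) (hα : 2 < α) : Tendsto (hypQ p α) atTop atTop := by
  have hc : 0 < 1 - (2 : ℝ) ^ (-p) := by
    have := rpow_lt_one_of_one_lt_of_neg one_lt_two (neg_neg_of_pos hp); linarith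
  have hbound : Tendsto (fun z : ℝ => (1 - 2 ^ (-p)) * (z ^ (2 / α) - 1)) atTop atTop :=
    (tendsto_atTop_add_const_right _ _ (tendsto_rpow_atTop (by positivity))).const_mul_atTop hc
  exact tendsto_atTop_mono' _ ((eventually_ge_atTop 1).mono fun z hz => le_hypQ hp.le hα hz) hbound

end

/-- `Q(z) = ₂F₁(m, −2/α; 1−2/α; −z) − 1` is nonnegative and strictly increasing on `[0,∞)`,
with `Q(0) = 0` and `Q(z) → ∞`; consequently `z ↦ λ_B/((λ̃/2)Q(z) + λ_B)` is strictly
decreasing on `[0,∞)` from `1` toward `0`. -/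
theorem hyp2F1_Q_monotone (m : ℕ) (α : ℝ) (hm : 0 < m) (hα : 2 < α)
    (lamB lamAct : ℝ) (hB : 0 < lamB) (hAct : 0 < lamAct) :
    (∀ z : ℝ, 0 ≤ z → 0 ≤ hyp2F1Neg m α z - 1) ∧
    StrictMonoOn (fun z => hyp2F1Neg m α z - 1) (Set.Ici 0) ∧
    hyp2F1Neg m α 0 - 1 = 0 ∧
    Tendsto (fun z => hyp2F1Neg m α z - 1) atTop atTop ∧
    StrictAntiOn (fun z => lamB / ((lamAct / 2) * (hyp2F1Neg m α z - 1) + lamB)) (Set.Ici 0) ∧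
    lamB / ((lamAct / 2) * (hyp2F1Neg m α 0 - 1) + lamB) = 1 ∧
    Tendsto (fun z => lamB / ((lamAct / 2) * (hyp2F1Neg m α z - 1) + lamB)) atTop (𝓝 0) := by
  have hp : (0 : ℝ) < m := Nat.cast_pos.2 hm
  simp only [hyp2F1Neg_sub_one]
  have hnonneg : ∀ z : ℝ, 0 ≤ z → 0 ≤ hypQ m α z := fun z hz => hypQ_nonneg hp.le hz
  have hmono := hypQ_strictMonoOn hp hα
  have htendsto := tendsto_hypQ_atTop hp hα
  refine ⟨hnonneg, hmono, hypQ_zero, htendsto,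
    strictAntiOn_div_mul_add hB (half_pos hAct) hnonneg hmono, ?_, ?_⟩
  · rw [hypQ_zero, mul_zero, zero_add, div_self hB.ne']
  · exact tendsto_const_nhds.div_atTop
      (tendsto_atTop_add_const_right _ _ (htendsto.const_mul_atTop (half_pos hAct)))
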